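/- Let H be a finite-dimensional Hopf algebra over a field K of characteristic zero and let W be a finite-dimensional H-comodule algebra with coaction ρ : W → W ⊗ H, ρ(w) = w₁ ⊗ w₂. Define M : W ⊗ W → W ⊗ H by M(x ⊗ y) = x y₁ ⊗ y₂. Then M is bijective if and only if there exists an algebra homomorphism T̃ : H → W^op ⊗ W (where W^op ⊗ W carries the product (a ⊗ b)(c ⊗ d) = ca ⊗ bd) such that M(T̃(h)) = 1 ⊗ h for all h ∈ H, and (m_W ⊗ id_W)((id_W ⊗ T̃)(ρ(w))) = 1 ⊗ w for all w ∈ W, where m_W is the multiplication of W and T̃(h) is viewed as an element of W ⊗ W. -/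
import Mathlib


open TensorProduct LinearMap

universe u

section ComodAlg

variable (K : Type u) [Field K]
variable (H W : Type u) [Ring H] [HopfAlgebra K H] [Ring W] [Algebra K W]

/-- The Galois map `M : W ⊗ W → W ⊗ H`, `x ⊗ y ↦ x y₁ ⊗ y₂` of a comodule algebra `W`
with coaction `ρ`. -/
noncomputable def galoisMap (ρ : W →ₗ[K] W ⊗[K] H) : W ⊗[K] W →ₗ[K] W ⊗[K] H :=
  TensorProduct.map (LinearMap.mul' K W) LinearMap.id ∘ₗ
    (TensorProduct.assoc K W W H).symm.toLinearMap ∘ₗ TensorProduct.map LinearMap.id ρ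

/-- The multiplication of `W^op ⊗ W`: `(a ⊗ b)(c ⊗ d) = ca ⊗ bd`. -/
noncomputable def opMulW : (W ⊗[K] W) ⊗[K] (W ⊗[K] W) →ₗ[K] W ⊗[K] W :=
  TensorProduct.map (LinearMap.mul' K W) (LinearMap.mul' K W) ∘ₗ
    TensorProduct.map (TensorProduct.comm K W W).toLinearMap LinearMap.id ∘ₗ
      (TensorProduct.tensorTensorTensorComm K W W W W).toLinearMap

/-- `T̃ : H → W^op ⊗ W` is an algebra homomorphism. -/
noncomputable def IsOpAlgHomW (T : H →ₗ[K] W ⊗[K] W) : Prop :=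
  T 1 = (1 : W) ⊗ₜ[K] (1 : W) ∧
    ∀ h h' : H, T (h * h') = opMulW K W (T h ⊗ₜ[K] T h')

end ComodAlg

section Helpers

variable {K : Type u} [Field K]
variable {H W : Type u} [Ring H] [HopfAlgebra K H] [Ring W] [Algebra K W]
variable (ρ : W →ₗ[K] W ⊗[K] H)

lemma galois_aux (x : W) (t : W ⊗[K] H) :
    TensorProduct.map (LinearMap.mul' K W) LinearMap.id
      ((TensorProduct.assoc K W W H).symm.toLinearMap (x ⊗ₜ[K] t)) =
      (x ⊗ₜ[K] (1 : H)) * t := by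
  induction t using TensorProduct.induction_on with
  | zero => simp only [tmul_zero, map_zero, mul_zero]
  | tmul a b =>
      simp only [LinearEquiv.coe_coe, assoc_symm_tmul, map_tmul, mul'_apply, id_coe, id_eq,
        Algebra.TensorProduct.tmul_mul_tmul, one_mul]
  | add s t hs ht => simp only [tmul_add, map_add, mul_add, hs, ht]

lemma galoisMap_tmul (x y : W) :
    galoisMap K H W ρ (x ⊗ₜ[K] y) = (x ⊗ₜ[K] (1 : H)) * ρ y := by
  unfold galoisMap
  simp only [coe_comp, Function.comp_apply, map_tmul, id_coe, id_eq]
  exact galois_aux x (ρ y)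

lemma opMulW_tmul (a b c d : W) :
    opMulW K W ((a ⊗ₜ[K] b) ⊗ₜ[K] (c ⊗ₜ[K] d)) = (c * a) ⊗ₜ[K] (b * d) := by
  unfold opMulW
  simp [tensorTensorTensorComm_tmul]

lemma galoisMap_mulLeft (x : W) (t : W ⊗[K] W) :
    galoisMap K H W ρ (TensorProduct.map (LinearMap.mulLeft K x) LinearMap.id t) =
      (x ⊗ₜ[K] (1 : H)) * galoisMap K H W ρ t := by
  induction t using TensorProduct.induction_on with
  | zero => simp only [map_zero, mul_zero]
  | tmul a b =>
      simp only [map_tmul, mulLeft_apply, id_coe, id_eq, galoisMap_tmul ρ]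
      rw [← mul_assoc, Algebra.TensorProduct.tmul_mul_tmul, mul_one]
  | add s t hs ht => simp only [map_add, mul_add, hs, ht]

lemma phi_aux (T : H →ₗ[K] W ⊗[K] W) (x : W) (t : W ⊗[K] W) :
    TensorProduct.map (LinearMap.mul' K W) LinearMap.id
      ((TensorProduct.assoc K W W W).symm.toLinearMap (x ⊗ₜ[K] t)) =
      TensorProduct.map (LinearMap.mulLeft K x) LinearMap.id t := by
  induction t using TensorProduct.induction_on with
  | zero => simp only [tmul_zero, map_zero]
  | tmul a b =>
      simp only [LinearEquiv.coe_coe, assoc_symm_tmul, map_tmul, mul'_apply, id_coe, id_eq,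
        mulLeft_apply]
  | add s t hs ht => simp only [tmul_add, map_add, hs, ht]

lemma phi_tmul (T : H →ₗ[K] W ⊗[K] W) (x : W) (h : H) :
    (TensorProduct.map (LinearMap.mul' K W) LinearMap.id ∘ₗ
      (TensorProduct.assoc K W W W).symm.toLinearMap ∘ₗ
        TensorProduct.map LinearMap.id T) (x ⊗ₜ[K] h) =
    TensorProduct.map (LinearMap.mulLeft K x) LinearMap.id (T h) := by
  simp only [coe_comp, Function.comp_apply, map_tmul, id_coe, id_eq]
  exact phi_aux T x (T h)

lemma galoisMap_opMul_aux (hmul : ∀ a b : W, ρ (a * b) = ρ a * ρ b)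
    (a : W ⊗[K] W) (c d : W) :
    galoisMap K H W ρ (opMulW K W (a ⊗ₜ[K] (c ⊗ₜ[K] d))) =
      (c ⊗ₜ[K] (1 : H)) * galoisMap K H W ρ a * ρ d := by
  induction a using TensorProduct.induction_on with
  | zero => simp only [zero_tmul, map_zero, mul_zero, zero_mul]
  | tmul u v =>
      rw [opMulW_tmul, galoisMap_tmul, galoisMap_tmul, hmul]
      rw [show ((c * u) ⊗ₜ[K] (1 : H)) = (c ⊗ₜ[K] (1:H)) * (u ⊗ₜ[K] (1:H)) by
        rw [Algebra.TensorProduct.tmul_mul_tmul, mul_one]]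
      simp only [mul_assoc]
  | add s t hs ht => simp only [add_tmul, map_add, mul_add, add_mul, hs, ht]

lemma galoisMap_opMul (hmul : ∀ a b : W, ρ (a * b) = ρ a * ρ b)
    (a b : W ⊗[K] W) (h : H) (ha : galoisMap K H W ρ a = (1 : W) ⊗ₜ[K] h) :
    galoisMap K H W ρ (opMulW K W (a ⊗ₜ[K] b)) = ((1:W) ⊗ₜ[K] h) * galoisMap K H W ρ b := by
  induction b using TensorProduct.induction_on with
  | zero => simp only [tmul_zero, map_zero, mul_zero]
  | tmul c d =>
      rw [galoisMap_opMul_aux ρ hmul, ha, galoisMap_tmul,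
        Algebra.TensorProduct.tmul_mul_tmul, mul_one, one_mul,
        show (c ⊗ₜ[K] h) = ((1:W) ⊗ₜ[K] h) * (c ⊗ₜ[K] (1:H)) by
          rw [Algebra.TensorProduct.tmul_mul_tmul, mul_one, one_mul],
        mul_assoc]
  | add s t hs ht => simp only [tmul_add, map_add, mul_add, hs, ht]

end Helpers

/-- For a finite-dimensional `H`-comodule algebra `W`, the map
`M(x ⊗ y) = x y₁ ⊗ y₂` is bijective iff there is an algebra homomorphism
`T̃ : H → W^op ⊗ W` with `M(T̃(h)) = 1 ⊗ h` and `(m_W ⊗ id)((id ⊗ T̃)(ρ(w))) = 1 ⊗ w`. -/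
theorem galoisMap_bijective_iff_exists_opAlgHom
    (K H W : Type u) [Field K] [CharZero K] [Ring H] [HopfAlgebra K H]
    [FiniteDimensional K H] [Ring W] [Algebra K W] [FiniteDimensional K W]
    (ρ : W →ₗ[K] W ⊗[K] H)
    (hone : ρ 1 = 1)
    (hmul : ∀ a b : W, ρ (a * b) = ρ a * ρ b)
    (hcoassoc : TensorProduct.map LinearMap.id Coalgebra.comul ∘ₗ ρ =
      (TensorProduct.assoc K W H H).toLinearMap ∘ₗ TensorProduct.map ρ LinearMap.id ∘ₗ ρ)
    (hcounit : (TensorProduct.rid K W).toLinearMap ∘ₗ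
      TensorProduct.map LinearMap.id Coalgebra.counit ∘ₗ ρ = LinearMap.id) :
    Function.Bijective (galoisMap K H W ρ) ↔
      ∃ T : H →ₗ[K] W ⊗[K] W, IsOpAlgHomW K H W T ∧
        galoisMap K H W ρ ∘ₗ T = TensorProduct.mk K W H 1 ∧
        TensorProduct.map (LinearMap.mul' K W) LinearMap.id ∘ₗ
            (TensorProduct.assoc K W W W).symm.toLinearMap ∘ₗ
              TensorProduct.map LinearMap.id T ∘ₗ ρ = TensorProduct.mk K W W 1 := by
  constructor
  · intro hbij
    set e := LinearEquiv.ofBijective (galoisMap K H W ρ) hbij with he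
    refine ⟨e.symm.toLinearMap ∘ₗ TensorProduct.mk K W H 1, ?_, ?_, ?_⟩
    case refine_2 =>
      apply LinearMap.ext; intro h
      simp only [coe_comp, Function.comp_apply, LinearEquiv.coe_coe]
      exact e.apply_symm_apply _
    all_goals
      have hMT : ∀ h : H, galoisMap K H W ρ
          ((e.symm.toLinearMap ∘ₗ TensorProduct.mk K W H 1) h) = (1 : W) ⊗ₜ[K] h := by
        intro h
        exact e.apply_symm_apply ((1 : W) ⊗ₜ[K] h)
    case refine_1 =>
      constructor
      · apply hbij.injective
        rw [hMT, galoisMap_tmul, hone, mul_one]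
      · intro h h'
        apply hbij.injective
        rw [hMT, galoisMap_opMul ρ hmul _ _ h (hMT h), hMT,
          Algebra.TensorProduct.tmul_mul_tmul, one_mul]
    case refine_3 =>
      apply LinearMap.ext; intro w
      apply hbij.injective
      have key : ∀ s : W ⊗[K] H, galoisMap K H W ρ
          ((TensorProduct.map (LinearMap.mul' K W) LinearMap.id ∘ₗ
            (TensorProduct.assoc K W W W).symm.toLinearMap ∘ₗ
              TensorProduct.map LinearMap.id
                (e.symm.toLinearMap ∘ₗ TensorProduct.mk K W H 1)) s) = s := by
        intro s
        induction s using TensorProduct.induction_on with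
        | zero => simp only [map_zero]
        | tmul x h =>
            rw [phi_tmul, galoisMap_mulLeft, hMT,
              Algebra.TensorProduct.tmul_mul_tmul, mul_one, one_mul]
        | add s t hs ht => simp only [map_add, hs, ht]
      simp only [coe_comp, Function.comp_apply] at key ⊢
      rw [key (ρ w), TensorProduct.mk_apply, galoisMap_tmul,
        ← Algebra.TensorProduct.one_def, one_mul]
  · rintro ⟨T, -, hMT, hTρ⟩
    have hMT' : ∀ h : H, galoisMap K H W ρ (T h) = (1 : W) ⊗ₜ[K] h := by
      intro h
      have := LinearMap.congr_fun hMT h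
      simpa using this
    have hTρ' : ∀ w : W,
        (TensorProduct.map (LinearMap.mul' K W) LinearMap.id ∘ₗ
          (TensorProduct.assoc K W W W).symm.toLinearMap ∘ₗ
            TensorProduct.map LinearMap.id T) (ρ w) = (1 : W) ⊗ₜ[K] w := by
      intro w
      have := LinearMap.congr_fun hTρ w
      simpa using this
    set ψ := TensorProduct.map (LinearMap.mul' K W) LinearMap.id ∘ₗ
      (TensorProduct.assoc K W W W).symm.toLinearMap ∘ₗ
        TensorProduct.map LinearMap.id T with hψ
    have hright : ∀ s : W ⊗[K] H, galoisMap K H W ρ (ψ s) = s := by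
      intro s
      induction s using TensorProduct.induction_on with
      | zero => simp only [map_zero]
      | tmul x h =>
          rw [hψ, phi_tmul, galoisMap_mulLeft, hMT',
            Algebra.TensorProduct.tmul_mul_tmul, mul_one, one_mul]
      | add s t hs ht => simp only [map_add, hs, ht]
    have hcomm : ∀ (x : W) (s : W ⊗[K] H),
        ψ ((x ⊗ₜ[K] (1 : H)) * s) =
          TensorProduct.map (LinearMap.mulLeft K x) LinearMap.id (ψ s) := by
      intro x s
      induction s using TensorProduct.induction_on with
      | zero => simp only [mul_zero, map_zero]
      | tmul u k =>
          rw [Algebra.TensorProduct.tmul_mul_tmul, one_mul, hψ, phi_tmul, phi_tmul]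
          induction T k using TensorProduct.induction_on with
          | zero => simp only [map_zero]
          | tmul a b =>
              simp only [map_tmul, mulLeft_apply, id_coe, id_eq, mul_assoc]
          | add s t hs ht => simp only [map_add, hs, ht]
      | add s t hs ht => simp only [mul_add, map_add, hs, ht]
    have hleft : ∀ t : W ⊗[K] W, ψ (galoisMap K H W ρ t) = t := by
      intro t
      induction t using TensorProduct.induction_on with
      | zero => simp only [map_zero]
      | tmul x y =>
          rw [galoisMap_tmul, hcomm, hTρ']
          simp only [map_tmul, mulLeft_apply, id_coe, id_eq, mul_one]
      | add s t hs ht => simp only [map_add, hs, ht]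
    exact ⟨Function.LeftInverse.injective hleft, Function.RightInverse.surjective hright⟩
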